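/- Fix ℓ ≥ 1. The set of multiple Riordan arrays (g; f₁, …, f_ℓ), with g ∈ K[[t^ℓ]] of order 0 and each f_j ∈ t·K[[t^ℓ]] with f_j'(0) ≠ 0, forms a group under the multiplication (g; f₁,…,f_ℓ)(d; h₁,…,h_ℓ) = (g·d(h); (f₁/h)·h₁(h), …, (f_ℓ/h)·h_ℓ(h)), where h = (f₁⋯f_ℓ)^{1/ℓ}, with identity (1; t, …, t). -/

import Mathlib

open PowerSeries

/-- Composition `g ∘ f` of formal power series (meaningful when `f` has zero
constant term). -/
noncomputable def pcomp {K : Type*} [Field K] (g f : PowerSeries K) : PowerSeries K :=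
  PowerSeries.mk fun n => ∑ k ∈ Finset.range (n + 1), coeff k g * coeff n (f ^ k)

/-- `f/t`: the coefficient shift of a power series. -/
noncomputable def pdivX {K : Type*} [Field K] (f : PowerSeries K) : PowerSeries K :=
  PowerSeries.mk fun n => coeff (n + 1) f

/-- `g ∈ K[[t^ℓ]]`: only coefficients of exponents divisible by `ℓ` survive. -/
def InTl {K : Type*} [Field K] (ℓ : ℕ) (g : PowerSeries K) : Prop :=
  ∀ n : ℕ, ¬ ℓ ∣ n → coeff n g = 0

/-- A multiplier function: `f ∈ t·K[[t^ℓ]]` with `f'(0) ≠ 0`. -/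
def IsMult {K : Type*} [Field K] (ℓ : ℕ) (f : PowerSeries K) : Prop :=
  constantCoeff f = 0 ∧ (∀ n : ℕ, n % ℓ ≠ 1 % ℓ → coeff n f = 0) ∧ coeff 1 f ≠ 0

/-- A multiple Riordan array `(g; f₁, …, f_ℓ)` together with its chosen
`ℓ`-th root `h` of `f₁⋯f_ℓ`. -/
def IsMR {K : Type*} [Field K] (ℓ : ℕ)
    (p : PowerSeries K × (Fin ℓ → PowerSeries K) × PowerSeries K) : Prop :=
  InTl ℓ p.1 ∧ constantCoeff p.1 ≠ 0 ∧ (∀ j, IsMult ℓ (p.2.1 j)) ∧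
    IsMult ℓ p.2.2 ∧ p.2.2 ^ ℓ = ∏ j, p.2.1 j

/-- The multiple Riordan product
`(g; f₁,…,f_ℓ)(d; h₁,…,h_ℓ) = (g·d(h); (f₁/h)h₁(h), …, (f_ℓ/h)h_ℓ(h))`,
where `h = (f₁⋯f_ℓ)^{1/ℓ}`. -/
noncomputable def mrMul {K : Type*} [Field K] {ℓ : ℕ}
    (p q : PowerSeries K × (Fin ℓ → PowerSeries K) × PowerSeries K) :
    PowerSeries K × (Fin ℓ → PowerSeries K) × PowerSeries K :=
  (p.1 * pcomp q.1 p.2.2,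
    fun j => pdivX (p.2.1 j) * (pdivX p.2.2)⁻¹ * pcomp (q.2.1 j) p.2.2,
    pcomp q.2.2 p.2.2)

/-!
Composition with a series of zero constant term is `PowerSeries.subst`, an algebra
homomorphism, so composition is multiplicative and associative; the product of arrays
inherits associativity from it together with `f(h)/t = (h/t) · (f/t)(h)`.

The conditions `g ∈ K[[t^ℓ]]` and `f ∈ t K[[t^ℓ]]` say that the coefficients of `g` and `f`
live in the residue classes `0` and `1` mod `ℓ`. These supports add under multiplication and
are preserved by composing with a series supported in residue `1`, which gives closure.
The relation `h^ℓ = ∏ f_j` makes the multipliers `f_j/h` multiply to `1`, so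
`(k(h))^ℓ = ∏ (f_j/h) u_j(h)` whenever `k^ℓ = ∏ u_j`.

If `H` is the compositional inverse of `h` (`H(h) = t`), then `((1/g)(H); (t h/f_j)(H); H)`
is a right inverse of `(g; f; h)`; in an associative structure with a right identity in
which every element has a right inverse, right inverses are also left inverses.
-/

namespace PowerSeries

variable {K : Type*} [Field K] {ℓ : ℕ}

theorem coeff_pcomp (g f : K⟦X⟧) (n : ℕ) :
    coeff n (pcomp g f) = ∑ k ∈ Finset.range (n + 1), coeff k g * coeff n (f ^ k) :=
  coeff_mk _ _

theorem constantCoeff_pcomp (g f : K⟦X⟧) : constantCoeff (pcomp g f) = constantCoeff g := by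
  simp [← coeff_zero_eq_constantCoeff, coeff_pcomp]

theorem coeff_pdivX (f : K⟦X⟧) (n : ℕ) : coeff n (pdivX f) = coeff (n + 1) f :=
  coeff_mk _ _

theorem constantCoeff_pdivX (f : K⟦X⟧) : constantCoeff (pdivX f) = coeff 1 f := by
  rw [← coeff_zero_eq_constantCoeff_apply, coeff_pdivX]

theorem X_mul_pdivX {f : K⟦X⟧} (hf : constantCoeff f = 0) : X * pdivX f = f := by
  simpa [hf, pdivX] using (sub_const_eq_X_mul_shift f).symm

theorem pdivX_X_mul (f : K⟦X⟧) : pdivX (X * f) = f := by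
  ext n; rw [coeff_pdivX, coeff_succ_X_mul]

theorem pdivX_X : pdivX (X : K⟦X⟧) = 1 := by
  simpa using pdivX_X_mul (1 : K⟦X⟧)

theorem coeff_pow_of_lt {f : K⟦X⟧} (hf : constantCoeff f = 0) {n k : ℕ} (h : n < k) :
    coeff n (f ^ k) = 0 := by
  rw [← X_mul_pdivX hf, mul_pow, coeff_X_pow_mul', if_neg (by omega)]

theorem coeff_pow_self {f : K⟦X⟧} (hf : constantCoeff f = 0) (n : ℕ) :
    coeff n (f ^ n) = coeff 1 f ^ n := by
  rw [← X_mul_pdivX hf, mul_pow, coeff_X_pow_mul', if_pos le_rfl, Nat.sub_self,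
    coeff_zero_eq_constantCoeff, map_pow, constantCoeff_pdivX, X_mul_pdivX hf]

theorem pcomp_eq_subst (g : K⟦X⟧) {f : K⟦X⟧} (hf : constantCoeff f = 0) :
    pcomp g f = g.subst f := by
  ext n
  rw [coeff_pcomp, coeff_subst' (HasSubst.of_constantCoeff_zero' hf),
    finsum_eq_sum_of_support_subset (s := Finset.range (n + 1))]
  · simp only [smul_eq_mul]
  · intro k hk
    by_contra hkn
    simp only [Finset.coe_range, Set.mem_Iio, not_lt] at hkn
    exact hk (by simp only [coeff_pow_of_lt hf (show n < k by omega), smul_zero])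

section Composition

variable {f : K⟦X⟧} (hf : constantCoeff f = 0)
include hf

theorem pcomp_mul (a b : K⟦X⟧) : pcomp (a * b) f = pcomp a f * pcomp b f := by
  simp only [pcomp_eq_subst _ hf, subst_mul (HasSubst.of_constantCoeff_zero' hf)]

theorem pcomp_one : pcomp 1 f = 1 := by
  rw [pcomp_eq_subst _ hf, ← coe_substAlgHom (HasSubst.of_constantCoeff_zero' hf), map_one]

theorem pcomp_prod {ι : Type*} (s : Finset ι) (a : ι → K⟦X⟧) :
    pcomp (∏ i ∈ s, a i) f = ∏ i ∈ s, pcomp (a i) f := by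
  simp only [pcomp_eq_subst _ hf, ← coe_substAlgHom (HasSubst.of_constantCoeff_zero' hf),
    map_prod]

theorem pcomp_pow (a : K⟦X⟧) (n : ℕ) : pcomp (a ^ n) f = pcomp a f ^ n := by
  simp only [pcomp_eq_subst _ hf, subst_pow (HasSubst.of_constantCoeff_zero' hf)]

theorem X_pcomp : pcomp X f = f := by
  rw [pcomp_eq_subst _ hf, subst_X (HasSubst.of_constantCoeff_zero' hf)]

theorem pcomp_pcomp {g : K⟦X⟧} (hg : constantCoeff g = 0) (a : K⟦X⟧) :
    pcomp (pcomp a g) f = pcomp a (pcomp g f) := by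
  have hgf : constantCoeff (pcomp g f) = 0 := by rw [constantCoeff_pcomp, hg]
  rw [pcomp_eq_subst _ hgf, pcomp_eq_subst _ hf, pcomp_eq_subst _ hf, pcomp_eq_subst _ hg,
    subst_comp_subst_apply (HasSubst.of_constantCoeff_zero' hg)
      (HasSubst.of_constantCoeff_zero' hf)]

theorem pcomp_inv {a : K⟦X⟧} (ha : constantCoeff a ≠ 0) : pcomp a⁻¹ f = (pcomp a f)⁻¹ := by
  rw [eq_inv_iff_mul_eq_one (by rwa [constantCoeff_pcomp]), ← pcomp_mul hf,
    PowerSeries.inv_mul_cancel a ha, pcomp_one hf]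

theorem pdivX_pcomp {a : K⟦X⟧} (ha : constantCoeff a = 0) :
    pdivX (pcomp a f) = pdivX f * pcomp (pdivX a) f := by
  have h : pcomp a f = X * (pdivX f * pcomp (pdivX a) f) := by
    conv_lhs => rw [← X_mul_pdivX ha, pcomp_mul hf, X_pcomp hf]
    rw [← mul_assoc, X_mul_pdivX hf]
  rw [h, pdivX_X_mul]

end Composition

theorem coeff_one_pcomp (a f : K⟦X⟧) : coeff 1 (pcomp a f) = coeff 1 a * coeff 1 f := by
  simp [coeff_pcomp, Finset.sum_range_succ]

theorem pcomp_X (a : K⟦X⟧) : pcomp a X = a := by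
  rw [pcomp_eq_subst _ constantCoeff_X, X_subst]

theorem pdivX_mul {a b : K⟦X⟧} (hb : constantCoeff b = 0) :
    pdivX (a * b) = a * pdivX b := by
  rw [← X_mul_pdivX hb, mul_left_comm, pdivX_X_mul, pdivX_X_mul]

/-- Solves `H(h) = t` coefficient by coefficient: `H_{n+1}` enters the coefficient of
`t^{n+1}` of `H(h)` only through `H_{n+1} h_1^{n+1}`. -/
noncomputable def compInvCoeff (h : K⟦X⟧) : ℕ → K
  | 0 => 0
  | n + 1 => (coeff 1 h ^ (n + 1))⁻¹ * (coeff (n + 1) (X : K⟦X⟧) -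
      ∑ k : Fin (n + 1), compInvCoeff h k * coeff (n + 1) (h ^ (k : ℕ)))

noncomputable def compInv (h : K⟦X⟧) : K⟦X⟧ := mk (compInvCoeff h)

theorem constantCoeff_compInv (h : K⟦X⟧) : constantCoeff (compInv h) = 0 := by
  rw [compInv, ← coeff_zero_eq_constantCoeff_apply, coeff_mk, compInvCoeff]

theorem coeff_compInv_succ (h : K⟦X⟧) (n : ℕ) :
    coeff (n + 1) (compInv h) = (coeff 1 h ^ (n + 1))⁻¹ * (coeff (n + 1) (X : K⟦X⟧) -
      ∑ k ∈ Finset.range (n + 1), coeff k (compInv h) * coeff (n + 1) (h ^ k)) := by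
  simp only [compInv, coeff_mk, compInvCoeff,
    Fin.sum_univ_eq_sum_range (fun k => compInvCoeff h k * coeff (n + 1) (h ^ k))]

theorem pcomp_compInv {h : K⟦X⟧} (h0 : constantCoeff h = 0) (h1 : coeff 1 h ≠ 0) :
    pcomp (compInv h) h = X := by
  ext n
  cases n with
  | zero => rw [coeff_zero_eq_constantCoeff_apply, constantCoeff_pcomp, constantCoeff_compInv,
      coeff_zero_X]
  | succ n =>
    rw [coeff_pcomp, Finset.sum_range_succ, coeff_pow_self h0, coeff_compInv_succ,
      mul_right_comm, inv_mul_cancel₀ (pow_ne_zero _ h1), one_mul, add_sub_cancel]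

section SupportedMod

variable {R : Type*} [Semiring R]

/-- `InTl ℓ` is `SupportedMod ℓ 0` and the support condition of `IsMult ℓ` is
`SupportedMod ℓ 1`; indexing by `ZMod ℓ` makes the residues of a product add. -/
def SupportedMod (ℓ : ℕ) (r : ZMod ℓ) (f : R⟦X⟧) : Prop :=
  ∀ n : ℕ, (n : ZMod ℓ) ≠ r → coeff n f = 0

theorem SupportedMod.one : SupportedMod ℓ 0 (1 : R⟦X⟧) := by
  intro n hn
  rw [coeff_one, if_neg]
  rintro rfl
  exact hn Nat.cast_zero

theorem SupportedMod.X : SupportedMod ℓ 1 (X : R⟦X⟧) := by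
  intro n hn
  rw [coeff_X, if_neg]
  rintro rfl
  exact hn Nat.cast_one

theorem SupportedMod.mul {r s : ZMod ℓ} {a b : R⟦X⟧} (ha : SupportedMod ℓ r a)
    (hb : SupportedMod ℓ s b) : SupportedMod ℓ (r + s) (a * b) := by
  intro n hn
  rw [coeff_mul]
  refine Finset.sum_eq_zero fun x hx => ?_
  rw [Finset.HasAntidiagonal.mem_antidiagonal] at hx
  by_cases h1 : (x.1 : ZMod ℓ) = r
  · rw [hb x.2 fun h2 => hn (by rw [← hx, Nat.cast_add, h1, h2]), mul_zero]
  · rw [ha x.1 h1, zero_mul]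

theorem SupportedMod.pow {r : ZMod ℓ} {a : R⟦X⟧} (ha : SupportedMod ℓ r a) :
    ∀ k : ℕ, SupportedMod ℓ (k * r) (a ^ k)
  | 0 => by simpa using SupportedMod.one
  | k + 1 => by simpa [pow_succ, add_mul] using (ha.pow k).mul ha

end SupportedMod

theorem SupportedMod.inv {a : K⟦X⟧} (ha : SupportedMod ℓ 0 a) : SupportedMod ℓ 0 a⁻¹ := by
  intro n
  induction n using Nat.strong_induction_on with
  | _ n ih =>
  intro hn
  have hn0 : n ≠ 0 := by rintro rfl; exact hn Nat.cast_zero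
  rw [coeff_inv, if_neg hn0, Finset.sum_eq_zero, mul_zero]
  intro x hx
  rw [Finset.HasAntidiagonal.mem_antidiagonal] at hx
  split_ifs with hlt
  · by_cases h2 : (x.2 : ZMod ℓ) = 0
    · rw [ha x.1 fun h1 => hn (by rw [← hx, Nat.cast_add, h1, h2, add_zero]), zero_mul]
    · rw [ih x.2 hlt h2, mul_zero]
  · rfl

theorem SupportedMod.pdivX {r : ZMod ℓ} {f : K⟦X⟧} (hf : SupportedMod ℓ (r + 1) f) :
    SupportedMod ℓ r (pdivX f) := by
  intro n hn
  rw [coeff_pdivX]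
  exact hf (n + 1) (by simpa using hn)

theorem SupportedMod.pcomp {r : ZMod ℓ} {a f : K⟦X⟧} (ha : SupportedMod ℓ r a)
    (hf : SupportedMod ℓ 1 f) : SupportedMod ℓ r (pcomp a f) := by
  intro n hn
  rw [coeff_pcomp]
  refine Finset.sum_eq_zero fun k _ => ?_
  by_cases hk : (k : ZMod ℓ) = r
  · rw [hf.pow k n (by rwa [mul_one, hk]), mul_zero]
  · rw [ha k hk, zero_mul]

theorem SupportedMod.compInv {h : K⟦X⟧} (hh : SupportedMod ℓ 1 h) :
    SupportedMod ℓ 1 (compInv h) := by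
  intro n
  induction n using Nat.strong_induction_on with
  | _ n ih =>
  intro hn
  cases n with
  | zero => exact (coeff_zero_eq_constantCoeff_apply _).trans (constantCoeff_compInv h)
  | succ n =>
    rw [coeff_compInv_succ, SupportedMod.X _ hn, Finset.sum_eq_zero, sub_zero, mul_zero]
    intro k hk
    by_cases hkn : (k : ZMod ℓ) = (n + 1 : ℕ)
    · rw [ih k (Finset.mem_range.1 hk) (hkn ▸ hn), zero_mul]
    · rw [hh.pow k (n + 1) (by rwa [mul_one, ne_comm]), mul_zero]

end PowerSeries

open PowerSeries

theorem mul_eq_of_mul_eq_of_mul_eq {α : Type*} {S : α → Prop} {mul : α → α → α} {e : α}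
    (hmul : ∀ {a b}, S a → S b → S (mul a b))
    (hassoc : ∀ {a b}, S a → S b → ∀ c, mul (mul a b) c = mul a (mul b c))
    (hid : ∀ {a}, S a → mul a e = a) {p q r : α} (hp : S p) (hq : S q)
    (hpq : mul p q = e) (hqr : mul q r = e) : mul q p = e :=
  calc mul q p = mul (mul q p) (mul q r) := by rw [hqr, hid (hmul hq hp)]
    _ = mul (mul q (mul p q)) r := by rw [← hassoc (hmul hq hp) hq, hassoc hq hp q]
    _ = e := by rw [hpq, hid hq, hqr]

section

variable {K : Type*} [Field K] {ℓ : ℕ}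

theorem inTl_iff_supportedMod {g : K⟦X⟧} : InTl ℓ g ↔ SupportedMod ℓ 0 g := by
  simp only [InTl, SupportedMod, ne_eq, ZMod.natCast_eq_zero_iff]

theorem isMult_iff {f : K⟦X⟧} :
    IsMult ℓ f ↔ constantCoeff f = 0 ∧ SupportedMod ℓ 1 f ∧ coeff 1 f ≠ 0 := by
  simp only [IsMult, SupportedMod, ne_eq, ← Nat.cast_one (R := ZMod ℓ),
    ZMod.natCast_eq_natCast_iff']

theorem IsMult.X : IsMult ℓ (X : K⟦X⟧) :=
  isMult_iff.2 ⟨constantCoeff_X, SupportedMod.X, by simp⟩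

theorem IsMult.constantCoeff_pdivX_ne_zero {f : K⟦X⟧} (hf : IsMult ℓ f) :
    constantCoeff (pdivX f) ≠ 0 := by
  rw [constantCoeff_pdivX]
  exact hf.2.2

theorem IsMult.pcomp {a f : K⟦X⟧} (ha : IsMult ℓ a) (hf : IsMult ℓ f) :
    IsMult ℓ (pcomp a f) := by
  rw [isMult_iff] at ha hf ⊢
  exact ⟨by rw [constantCoeff_pcomp, ha.1], ha.2.1.pcomp hf.2.1,
    by rw [coeff_one_pcomp]; exact mul_ne_zero ha.2.2 hf.2.2⟩

theorem IsMult.mul_left {a f : K⟦X⟧} (ha : SupportedMod ℓ 0 a) (ha0 : constantCoeff a ≠ 0)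
    (hf : IsMult ℓ f) : IsMult ℓ (a * f) := by
  rw [isMult_iff] at hf ⊢
  refine ⟨by rw [map_mul, hf.1, mul_zero], by simpa using ha.mul hf.2.1, ?_⟩
  rw [← X_mul_pdivX hf.1, mul_left_comm, coeff_succ_X_mul, coeff_zero_eq_constantCoeff_apply,
    map_mul, constantCoeff_pdivX]
  exact mul_ne_zero ha0 hf.2.2

theorem IsMult.compInv {h : K⟦X⟧} (hh : IsMult ℓ h) : IsMult ℓ (compInv h) := by
  rw [isMult_iff] at hh ⊢
  refine ⟨constantCoeff_compInv h, hh.2.1.compInv, left_ne_zero_of_mul_eq_one (b := coeff 1 h) ?_⟩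
  rw [← coeff_one_pcomp, pcomp_compInv hh.1 hh.2.2, coeff_one_X]

theorem IsMult.supportedMod_pdivX {f : K⟦X⟧} (hf : IsMult ℓ f) : SupportedMod ℓ 0 (pdivX f) :=
  SupportedMod.pdivX (by simpa using (isMult_iff.1 hf).2.1)

theorem IsMult.supportedMod_pdivX_mul_inv {f h : K⟦X⟧} (hf : IsMult ℓ f) (hh : IsMult ℓ h) :
    SupportedMod ℓ 0 (pdivX f * (pdivX h)⁻¹) := by
  simpa using hf.supportedMod_pdivX.mul hh.supportedMod_pdivX.inv

theorem IsMult.constantCoeff_pdivX_mul_inv_ne_zero {f h : K⟦X⟧} (hf : IsMult ℓ f)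
    (hh : IsMult ℓ h) : constantCoeff (pdivX f * (pdivX h)⁻¹) ≠ 0 := by
  rw [map_mul, constantCoeff_inv]
  exact mul_ne_zero hf.constantCoeff_pdivX_ne_zero (inv_ne_zero hh.constantCoeff_pdivX_ne_zero)

theorem pow_pdivX_eq_prod {f : Fin ℓ → K⟦X⟧} {h : K⟦X⟧} (hf : ∀ j, constantCoeff (f j) = 0)
    (hh : constantCoeff h = 0) (hfh : h ^ ℓ = ∏ j, f j) : pdivX h ^ ℓ = ∏ j, pdivX (f j) := by
  refine mul_left_cancel₀ (pow_ne_zero ℓ X_ne_zero) ?_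
  calc X ^ ℓ * pdivX h ^ ℓ = ∏ j, f j := by rw [← mul_pow, X_mul_pdivX hh, hfh]
    _ = ∏ j, X * pdivX (f j) := Finset.prod_congr rfl fun j _ => (X_mul_pdivX (hf j)).symm
    _ = X ^ ℓ * ∏ j, pdivX (f j) := by
      rw [Finset.prod_mul_distrib, Finset.prod_const, Finset.card_univ, Fintype.card_fin]

abbrev MRArray (K : Type*) (ℓ : ℕ) : Type _ := K⟦X⟧ × (Fin ℓ → K⟦X⟧) × K⟦X⟧

theorem IsMR.prod_pdivX_mul_inv {p : MRArray K ℓ} (hp : IsMR ℓ p) :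
    ∏ j, pdivX (p.2.1 j) * (pdivX p.2.2)⁻¹ = 1 := by
  obtain ⟨-, -, hf, hh, hfh⟩ := hp
  rw [Finset.prod_mul_distrib, ← pow_pdivX_eq_prod (fun j => (hf j).1) hh.1 hfh,
    Finset.prod_const, Finset.card_univ, Fintype.card_fin, ← mul_pow,
    PowerSeries.mul_inv_cancel _ hh.constantCoeff_pdivX_ne_zero, one_pow]

theorem isMR_mrMul {p q : MRArray K ℓ} (hp : IsMR ℓ p) (hq : IsMR ℓ q) :
    IsMR ℓ (mrMul p q) := by
  have hprod := hp.prod_pdivX_mul_inv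
  obtain ⟨g, f, h⟩ := p
  obtain ⟨d, u, k⟩ := q
  obtain ⟨hg, hg0, hf, hh, -⟩ := hp
  obtain ⟨hd, hd0, hu, hk, huk⟩ := hq
  refine ⟨?_, ?_, fun j => ?_, hk.pcomp hh, ?_⟩
  · rw [inTl_iff_supportedMod] at hg hd ⊢
    simpa [mrMul] using hg.mul (hd.pcomp (isMult_iff.1 hh).2.1)
  · rw [mrMul, map_mul, constantCoeff_pcomp]
    exact mul_ne_zero hg0 hd0
  · exact IsMult.mul_left ((hf j).supportedMod_pdivX_mul_inv hh)
      ((hf j).constantCoeff_pdivX_mul_inv_ne_zero hh) ((hu j).pcomp hh)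
  · calc pcomp k h ^ ℓ = pcomp (∏ j, u j) h := by rw [← huk, pcomp_pow hh.1]
      _ = ∏ j, pdivX (f j) * (pdivX h)⁻¹ * pcomp (u j) h := by
        rw [pcomp_prod hh.1, Finset.prod_mul_distrib, hprod, one_mul]

theorem mrMul_assoc {p q : MRArray K ℓ} (hp : IsMR ℓ p) (hq : IsMR ℓ q) (r : MRArray K ℓ) :
    mrMul (mrMul p q) r = mrMul p (mrMul q r) := by
  obtain ⟨g, f, h⟩ := p
  obtain ⟨d, u, k⟩ := q
  obtain ⟨-, -, -, hh, -⟩ := hp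
  obtain ⟨-, -, hu, hk, -⟩ := hq
  have hh0 : constantCoeff h = 0 := hh.1
  have hk0 : constantCoeff k = 0 := hk.1
  simp only [mrMul, Prod.mk.injEq]
  refine ⟨by rw [pcomp_mul hh0, pcomp_pcomp hh0 hk0, mul_assoc], funext fun j => ?_,
    (pcomp_pcomp hh0 hk0 _).symm⟩
  rw [pdivX_mul ((hu j).pcomp hh).1, pdivX_pcomp hh0 (hu j).1, pdivX_pcomp hh0 hk0,
    PowerSeries.mul_inv_rev, pcomp_mul hh0, pcomp_mul hh0, pcomp_pcomp hh0 hk0,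
    pcomp_inv hh0 hk.constantCoeff_pdivX_ne_zero]
  linear_combination (pdivX (f j) * (pdivX h)⁻¹ * pcomp (pdivX (u j)) h *
    (pcomp (pdivX k) h)⁻¹ * pcomp (r.2.1 j) (pcomp k h)) *
    PowerSeries.mul_inv_cancel _ hh.constantCoeff_pdivX_ne_zero

theorem isMR_one : IsMR ℓ ((1, fun _ => X, X) : MRArray K ℓ) :=
  ⟨inTl_iff_supportedMod.2 SupportedMod.one, by simp, fun _ => IsMult.X, IsMult.X,
    by simp [Finset.prod_const]⟩

theorem one_mrMul (p : MRArray K ℓ) : mrMul (1, fun _ => X, X) p = p := by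
  simp [mrMul, pdivX_X, pcomp_X]

theorem mrMul_one {p : MRArray K ℓ} (hp : IsMR ℓ p) : mrMul p (1, fun _ => X, X) = p := by
  obtain ⟨g, f, h⟩ := p
  obtain ⟨-, -, hf, hh, -⟩ := hp
  simp only [mrMul, Prod.mk.injEq, pcomp_one hh.1, mul_one, X_pcomp hh.1, true_and, and_true]
  funext j
  linear_combination (-(pdivX (f j) * (pdivX h)⁻¹)) * X_mul_pdivX hh.1 + X_mul_pdivX (hf j).1 +
    (X * pdivX (f j)) * PowerSeries.mul_inv_cancel _ hh.constantCoeff_pdivX_ne_zero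

theorem IsMR.exists_mrMul_eq_one {p : MRArray K ℓ} (hp : IsMR ℓ p) :
    ∃ q, IsMR ℓ q ∧ mrMul p q = (1, fun _ => X, X) := by
  have hprod := hp.prod_pdivX_mul_inv
  obtain ⟨g, f, h⟩ := p
  obtain ⟨hg, hg0, hf, hh, -⟩ := hp
  set ρ : Fin ℓ → K⟦X⟧ := fun j => pdivX (f j) * (pdivX h)⁻¹
  have hρ : ∀ j, ρ j * (ρ j)⁻¹ = 1 := fun j =>
    PowerSeries.mul_inv_cancel _ ((hf j).constantCoeff_pdivX_mul_inv_ne_zero hh)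
  set H := compInv h
  have hH : IsMult ℓ H := hh.compInv
  have hHh : pcomp H h = X := pcomp_compInv hh.1 hh.2.2
  refine ⟨(pcomp g⁻¹ H, fun j => pcomp ((ρ j)⁻¹ * X) H, H), ⟨?_, ?_, fun j => ?_, hH, ?_⟩, ?_⟩
  · rw [inTl_iff_supportedMod] at hg ⊢
    exact hg.inv.pcomp (isMult_iff.1 hH).2.1
  · rw [constantCoeff_pcomp, constantCoeff_inv]
    exact inv_ne_zero hg0
  · refine (IsMult.mul_left ?_ ?_ IsMult.X).pcomp hH
    · exact ((hf j).supportedMod_pdivX_mul_inv hh).inv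
    · rw [constantCoeff_inv]
      exact inv_ne_zero ((hf j).constantCoeff_pdivX_mul_inv_ne_zero hh)
  · have hX : ∏ j, (ρ j)⁻¹ * X = X ^ ℓ := by
      calc ∏ j, (ρ j)⁻¹ * X = (∏ j, ρ j) * ∏ j, (ρ j)⁻¹ * X := by rw [hprod, one_mul]
        _ = ∏ _j : Fin ℓ, X := by
          rw [← Finset.prod_mul_distrib]
          exact Finset.prod_congr rfl fun j _ => by rw [← mul_assoc, hρ, one_mul]
        _ = X ^ ℓ := by simp
    change H ^ ℓ = ∏ j, pcomp ((ρ j)⁻¹ * X) H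
    rw [← pcomp_prod hH.1, hX, pcomp_pow hH.1, X_pcomp hH.1]
  · simp only [mrMul, Prod.mk.injEq, pcomp_pcomp hh.1 hH.1, hHh, pcomp_X, and_true]
    refine ⟨PowerSeries.mul_inv_cancel _ hg0, funext fun j => ?_⟩
    rw [← mul_assoc, hρ, one_mul]

end

theorem multiple_riordan_group {K : Type*} [Field K] (ℓ : ℕ) :
    (∀ p q : PowerSeries K × (Fin ℓ → PowerSeries K) × PowerSeries K,
      IsMR ℓ p → IsMR ℓ q → IsMR ℓ (mrMul p q)) ∧
    (∀ p q r : PowerSeries K × (Fin ℓ → PowerSeries K) × PowerSeries K,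
      IsMR ℓ p → IsMR ℓ q → IsMR ℓ r → mrMul (mrMul p q) r = mrMul p (mrMul q r)) ∧
    IsMR ℓ ((1, fun _ => X, X) : PowerSeries K × (Fin ℓ → PowerSeries K) × PowerSeries K) ∧
    (∀ p : PowerSeries K × (Fin ℓ → PowerSeries K) × PowerSeries K, IsMR ℓ p →
      mrMul (1, fun _ => X, X) p = p ∧ mrMul p (1, fun _ => X, X) = p) ∧
    (∀ p : PowerSeries K × (Fin ℓ → PowerSeries K) × PowerSeries K, IsMR ℓ p →
      ∃ q : PowerSeries K × (Fin ℓ → PowerSeries K) × PowerSeries K, IsMR ℓ q ∧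
        mrMul p q = (1, fun _ => X, X) ∧ mrMul q p = (1, fun _ => X, X)) := by
  refine ⟨fun _ _ => isMR_mrMul, fun _ _ r hp hq _ => mrMul_assoc hp hq r, isMR_one,
    fun p hp => ⟨one_mrMul p, mrMul_one hp⟩, fun p hp => ?_⟩
  obtain ⟨q, hq, hpq⟩ := hp.exists_mrMul_eq_one
  obtain ⟨r, -, hqr⟩ := hq.exists_mrMul_eq_one
  exact ⟨q, hq, hpq,
    mul_eq_of_mul_eq_of_mul_eq isMR_mrMul mrMul_assoc mrMul_one hp hq hpq hqr⟩
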